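/- Let H be a Hilbert space and A_i, A_e injective nonnegative self-adjoint operators with common domain D such that A_i + A_e : D → H is bijective. Then for u, v ∈ D one has ⟨A_i(A_i+A_e)^{-1}A_e u, v⟩ = ⟨u, A_i(A_i+A_e)^{-1}A_e v⟩, i.e., the bidomain operator A = A_i(A_i+A_e)^{-1}A_e is symmetric. -/
import Mathlib


open scoped InnerProductSpace

/-- For injective nonnegative self-adjoint operators `A_i, A_e` on a Hilbert
space with common domain `D` such that `A_i + A_e : D → H` has a (bounded) two-sided inverse,
the bidomain operator `A = A_i (A_i + A_e)⁻¹ A_e` is symmetric: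
`⟨A u, v⟩ = ⟨u, A v⟩` for `u, v ∈ D`. -/
theorem stmt_10 {H : Type*} [NormedAddCommGroup H] [InnerProductSpace ℂ H] [CompleteSpace H]
    (D : Submodule ℂ H) (hD : Dense (D : Set H))
    (Ai Ae : D →ₗ[ℂ] H)
    (hisym : ∀ u v : D, ⟪Ai u, (v : H)⟫_ℂ = ⟪(u : H), Ai v⟫_ℂ)
    (hesym : ∀ u v : D, ⟪Ae u, (v : H)⟫_ℂ = ⟪(u : H), Ae v⟫_ℂ)
    (hinn : ∀ u : D, 0 ≤ (⟪Ai u, (u : H)⟫_ℂ).re)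
    (henn : ∀ u : D, 0 ≤ (⟪Ae u, (u : H)⟫_ℂ).re)
    (hiInj : Function.Injective Ai) (heInj : Function.Injective Ae)
    (Sinv : H →L[ℂ] H) (hrange : ∀ x : H, Sinv x ∈ D)
    (hleft : ∀ u : D, Sinv (Ai u + Ae u) = (u : H))
    (hright : ∀ x : H, Ai ⟨Sinv x, hrange x⟩ + Ae ⟨Sinv x, hrange x⟩ = x) :
    ∀ u v : D, ⟪Ai ⟨Sinv (Ae u), hrange _⟩, (v : H)⟫_ℂ =
      ⟪(u : H), Ai ⟨Sinv (Ae v), hrange _⟩⟫_ℂ := by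
  intro u v
  set w : D := ⟨Sinv (Ae u), hrange _⟩ with hwdef
  set z : D := ⟨Sinv (Ae v), hrange _⟩ with hzdef
  have hw : Ai w = Ae (u - w) := by
    rw [map_sub, eq_sub_iff_add_eq]; exact hright (Ae u)
  have hz : Ae v = Ai z + Ae z := (hright (Ae v)).symm
  calc ⟪Ai w, (v : H)⟫_ℂ = ⟪Ae (u - w), (v : H)⟫_ℂ := by rw [hw]
    _ = ⟪((u - w : D) : H), Ae v⟫_ℂ := hesym _ _
    _ = ⟪((u - w : D) : H), Ai z⟫_ℂ + ⟪((u - w : D) : H), Ae z⟫_ℂ := by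
        rw [hz, inner_add_right]
    _ = ⟪((u - w : D) : H), Ai z⟫_ℂ + ⟪(w : H), Ai z⟫_ℂ := by
        rw [← hesym (u - w) z, ← hw, hisym w z]
    _ = ⟪(u : H), Ai z⟫_ℂ := by
        rw [← inner_add_left, Submodule.coe_sub, sub_add_cancel]
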